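/- Let n ≥ 1, d ≥ 2 be integers with d-sequence n_0 > ⋯ > n_k = m. Let Σ_0(n,d) denote the kernel of the multiplication-by-d^k endomorphism a ↦ d^k·a of the abelian group Σ(n,d). Then Σ(n,d) ≅ Σ_0(n,d) ⊕ Σ(m,d). -/

import Mathlib

open Polynomial Matrix

noncomputable section

/-- The `d`-sequence of `n`: `n_0 = n`, `n_{i+1} = n_i / gcd(n_i, d)`. -/
def nseq (n d : ℕ) : ℕ → ℕ
  | 0 => n
  | i + 1 => nseq n d i / Nat.gcd (nseq n d i) d

/-- `Rq n` is the ring `ℤ[x]/(x^n - 1)`. -/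
abbrev Rq (n : ℕ) : Type := Polynomial ℤ ⧸ Ideal.span ({X ^ n - 1} : Set (Polynomial ℤ))

/-- Projection `ℤ[x] → ℤ[x]/(x^n-1)`. -/
def mkR (n : ℕ) : Polynomial ℤ →ₐ[ℤ] Rq n := Ideal.Quotient.mkₐ ℤ _

/-- Evaluation at 1, `ℤ[x]/(x^n-1) → ℤ`. -/
def evalOne (n : ℕ) : Rq n →ₐ[ℤ] ℤ :=
  Ideal.Quotient.liftₐ _ (aeval (1 : ℤ)) (by
    intro a ha
    have h : Ideal.span ({X ^ n - 1} : Set (Polynomial ℤ)) ≤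
        RingHom.ker (aeval (1 : ℤ) : Polynomial ℤ →ₐ[ℤ] ℤ) := by
      rw [Ideal.span_le]
      rintro b ⟨rfl⟩
      simp [RingHom.mem_ker]
    exact h ha)

/-- `𝒵_n`, the ℤ-submodule of elements of `ℤ[x]/(x^n-1)` vanishing at 1. -/
def Znd (n : ℕ) : Submodule ℤ (Rq n) := LinearMap.ker (evalOne n).toLinearMap

/-- `e_v = x^v - 1`. -/
def eR (n : ℕ) (v : ZMod n) : Rq n := mkR n (X ^ v.val - 1)

lemma eR_mem (n : ℕ) (v : ZMod n) : eR n v ∈ Znd n := by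
  change (aeval (1 : ℤ)) (X ^ v.val - 1 : Polynomial ℤ) = 0
  simp

/-- `e_v` as an element of `𝒵_n`. -/
def eZ (n : ℕ) (v : ZMod n) : Znd n := ⟨eR n v, eR_mem n v⟩

/-- `ε_v = d·e_v − e_{d·v}`. -/
def epsR (n d : ℕ) (v : ZMod n) : Rq n := (d : ℤ) • eR n v - eR n ((d : ZMod n) * v)

/-- `ℰ_{n,d}`: the ℤ-submodule generated by the `ε_v`, `v ≠ 0`. -/
def Esub (n d : ℕ) : Submodule ℤ (Rq n) :=
  Submodule.span ℤ {x | ∃ v : ZMod n, v ≠ 0 ∧ x = epsR n d v}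

/-- The sand dune group `Σ(n,d) = 𝒵_n / ℰ_{n,d}` of `DB(n,d)`. -/
abbrev SigmaGrp (n d : ℕ) : Type :=
  Znd n ⧸ (Esub n d).comap (Znd n).subtype

/-- Projection `𝒵_n → Σ(n,d)`. -/
def sigmaMk (n d : ℕ) (a : Znd n) : SigmaGrp n d := Submodule.Quotient.mk a

/-- `f_v = d·x^v − x^{d·v}(1 + x + ⋯ + x^{d−1})`. -/
def fR (n d : ℕ) (v : ZMod n) : Rq n :=
  mkR n ((d : Polynomial ℤ) * X ^ v.val -
    X ^ (((d : ZMod n) * v).val) * (∑ i ∈ Finset.range d, X ^ i))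

/-- The `R`-span of the `f_v`, `v ≠ 0`, where `R = ℤ[x]/(x^n-1)`. -/
def Fsub (n d : ℕ) : Submodule (Rq n) (Rq n) :=
  Submodule.span (Rq n) {x | ∃ v : ZMod n, v ≠ 0 ∧ x = fR n d v}

/-- The sandpile (critical) group `S(n,d)` of the generalized de Bruijn graph `DB(n,d)`:
the quotient of `𝒵_n` by the `R`-span of the `f_v`, `v ≠ 0`. -/
abbrev SGrp (n d : ℕ) : Type :=
  Znd n ⧸ ((Fsub n d).restrictScalars ℤ).comap (Znd n).subtype

/-!
Write `n = m q` with `q ∣ d^k`, say `q t = d^k`. The substitutions `x ↦ x^t` and `x ↦ x^q`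
induce maps `φ : Σ(n,d) → Σ(m,d)` and `ψ : Σ(m,d) → Σ(n,d)`. Both composites send the generator
`e_j` to `e_{d^k j}`, which the relations `ε_v` identify with `d^k e_j`; so `ψ ∘ φ` and `φ ∘ ψ`
are multiplication by `d^k`. As `gcd(m,d) = 1`, the substitution `x ↦ x^c` with
`c d^k ≡ 1 (mod m)` inverts `d^k` on `Σ(m,d)`, so `ψ ∘ (d^k)⁻¹` is a section of `φ`, whose kernel
is `ker (ψ ∘ φ) = Σ₀(n,d)`.
-/

def xPow (n j : ℕ) : Rq n := mkR n (X ^ j)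

theorem xPow_mul (n a b : ℕ) : xPow n (a * b) = xPow n a ^ b := by
  simp only [xPow, ← map_pow, ← pow_mul]

theorem xPow_eq_one_of_dvd {n j : ℕ} (h : n ∣ j) : xPow n j = 1 := by
  obtain ⟨c, rfl⟩ := h
  have hn : xPow n n = 1 := by
    rw [← sub_eq_zero, xPow, ← map_one (mkR n), ← map_sub]
    exact Ideal.Quotient.eq_zero_iff_mem.mpr (Ideal.subset_span rfl)
  rw [xPow_mul, hn, one_pow]

theorem xPow_congr {n a b : ℕ} (h : a ≡ b [MOD n]) : xPow n a = xPow n b := by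
  have hmod (j : ℕ) : xPow n j = xPow n (j % n) := by
    conv_lhs => rw [← Nat.div_add_mod j n]
    rw [xPow, pow_add, map_mul, ← xPow, xPow_eq_one_of_dvd (dvd_mul_right n _), one_mul, xPow]
  rw [hmod a, hmod b, h]

theorem evalOne_mkR (n : ℕ) (p : ℤ[X]) : evalOne n (mkR n p) = aeval 1 p := rfl

theorem evalOne_xPow (n j : ℕ) : evalOne n (xPow n j) = 1 := by
  simp [xPow, evalOne_mkR]

theorem coe_eZ_natCast (n j : ℕ) : (eZ n j : Rq n) = xPow n j - 1 := by
  change mkR n _ = _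
  rw [ZMod.val_natCast, map_sub, map_one, ← xPow, ← xPow_congr (Nat.mod_modEq j n)]

theorem epsR_natCast (n d j : ℕ) :
    epsR n d j = (d : ℤ) • (xPow n j - 1) - (xPow n (d * j) - 1) := by
  rw [epsR, ← Nat.cast_mul]
  exact congr_arg₂ _ (congr_arg _ (coe_eZ_natCast n j)) (coe_eZ_natCast n (d * j))

theorem epsR_mem_Esub (n d : ℕ) (v : ZMod n) : epsR n d v ∈ Esub n d := by
  by_cases hv : v = 0
  · simp [hv, epsR, eR]
  · exact Submodule.subset_span ⟨v, hv, rfl⟩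

theorem mkR_sub_smul_one_mem_span (n : ℕ) (p : ℤ[X]) :
    mkR n p - aeval (1 : ℤ) p • (1 : Rq n) ∈
      Submodule.span ℤ (Set.range fun j => xPow n j - 1) := by
  induction p using Polynomial.induction_on' with
  | add p q hp hq =>
    rw [map_add, map_add, add_smul, add_sub_add_comm]
    exact add_mem hp hq
  | monomial j a =>
    have h : mkR n (monomial j a) - aeval (1 : ℤ) (monomial j a) • (1 : Rq n) =
        a • (xPow n j - 1) := by
      rw [← C_mul_X_pow_eq_monomial, map_mul, xPow, smul_sub, zsmul_eq_mul]
      simp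
    rw [h]
    exact Submodule.smul_mem _ _ (Submodule.subset_span ⟨j, rfl⟩)

/-- `x ↦ x^c`, well defined because `m ∣ c n` makes `x^(c n) = 1` in `ℤ[x]/(x^m - 1)`. -/
def expandHom (n m c : ℕ) (h : m ∣ c * n) : Rq n →ₐ[ℤ] Rq m :=
  Ideal.Quotient.liftₐ _ (aeval (xPow m c)) (by
    have hle : Ideal.span {X ^ n - 1} ≤ RingHom.ker (aeval (xPow m c) : ℤ[X] →ₐ[ℤ] Rq m) := by
      rw [Ideal.span_le, Set.singleton_subset_iff, SetLike.mem_coe, RingHom.mem_ker]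
      simp [← xPow_mul, xPow_eq_one_of_dvd h]
    exact fun a ha => hle ha)

theorem expandHom_mkR (n m c : ℕ) (h : m ∣ c * n) (p : ℤ[X]) :
    expandHom n m c h (mkR n p) = aeval (xPow m c) p := rfl

theorem expandHom_xPow (n m c : ℕ) (h : m ∣ c * n) (j : ℕ) :
    expandHom n m c h (xPow n j) = xPow m (c * j) := by
  rw [xPow, expandHom_mkR, map_pow, aeval_X, xPow_mul]

theorem evalOne_expandHom (n m c : ℕ) (h : m ∣ c * n) (a : Rq n) :
    evalOne m (expandHom n m c h a) = evalOne n a := by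
  obtain ⟨p, rfl⟩ := Ideal.Quotient.mkₐ_surjective ℤ _ a
  change evalOne m (expandHom n m c h (mkR n p)) = evalOne n (mkR n p)
  rw [expandHom_mkR, evalOne_mkR, ← aeval_algHom_apply, evalOne_xPow]

theorem expandHom_mem_Esub (n m d c : ℕ) [NeZero n] (h : m ∣ c * n) {a : Rq n}
    (ha : a ∈ Esub n d) : expandHom n m c h a ∈ Esub m d := by
  suffices Esub n d ≤ (Esub m d).comap (expandHom n m c h).toLinearMap from this ha
  refine Submodule.span_le.mpr ?_
  rintro _ ⟨v, -, rfl⟩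
  have hexp := epsR_natCast m d (c * v.val)
  rw [← ZMod.natCast_zmod_val v, epsR_natCast, SetLike.mem_coe, Submodule.mem_comap,
    AlgHom.toLinearMap_apply, map_sub, map_zsmul, map_sub, map_sub, map_one,
    expandHom_xPow, expandHom_xPow, mul_left_comm, ← hexp]
  exact epsR_mem_Esub m d _

theorem mem_span_xPow_sub_one {n : ℕ} {a : Rq n} (ha : a ∈ Znd n) :
    a ∈ Submodule.span ℤ (Set.range fun j => xPow n j - 1) := by
  obtain ⟨p, rfl⟩ := Ideal.Quotient.mkₐ_surjective ℤ _ a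
  have hp : aeval (1 : ℤ) p = 0 := ha
  change mkR n p ∈ _
  simpa [hp] using mkR_sub_smul_one_mem_span n p

theorem span_range_eZ_natCast (n : ℕ) :
    Submodule.span ℤ (Set.range fun j : ℕ => eZ n j) = ⊤ := by
  refine Submodule.eq_top_iff'.mpr fun a => ?_
  have ha : (a : Rq n) ∈ (Submodule.span ℤ (Set.range fun j : ℕ => eZ n j)).map
      (Znd n).subtype := by
    rw [Submodule.map_span, ← Set.range_comp]
    simpa [Function.comp_def, coe_eZ_natCast] using mem_span_xPow_sub_one a.2
  obtain ⟨b, hb, hba⟩ := ha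
  rwa [← Subtype.ext hba]

/-- Indexing by `j : ℕ` rather than `ZMod n` keeps the index arithmetic of `x ↦ x^c` in `ℕ`. -/
def sigmaGen (n d j : ℕ) : SigmaGrp n d := sigmaMk n d (eZ n j)

theorem span_range_sigmaGen (n d : ℕ) : Submodule.span ℤ (Set.range (sigmaGen n d)) = ⊤ := by
  have himage : Set.range (sigmaGen n d) =
      ((Esub n d).comap (Znd n).subtype).mkQ '' Set.range fun j : ℕ => eZ n j := by
    rw [← Set.range_comp]
    rfl
  rw [himage, ← Submodule.map_span, span_range_eZ_natCast, Submodule.map_top,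
    Submodule.range_mkQ]

theorem sigma_linearMap_ext {n d : ℕ} {M : Type*} [AddCommGroup M] [Module ℤ M]
    {f g : SigmaGrp n d →ₗ[ℤ] M} (h : ∀ j, f (sigmaGen n d j) = g (sigmaGen n d j)) : f = g :=
  LinearMap.ext_on_range (span_range_sigmaGen n d) h

theorem sigmaGen_mul_left (n d j : ℕ) : sigmaGen n d (d * j) = (d : ℤ) • sigmaGen n d j := by
  rw [sigmaGen, sigmaGen, sigmaMk, sigmaMk, ← Submodule.Quotient.mk_smul,
    Submodule.Quotient.eq]
  have hdiff : ((eZ n (d * j : ℕ) - (d : ℤ) • eZ n j : Znd n) : Rq n) = -epsR n d j := by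
    rw [epsR_natCast, Submodule.coe_sub, Submodule.coe_smul, coe_eZ_natCast, coe_eZ_natCast]
    abel
  rw [Submodule.mem_comap, Submodule.subtype_apply, hdiff]
  exact neg_mem (epsR_mem_Esub n d _)

theorem sigmaGen_pow_mul (n d i j : ℕ) :
    sigmaGen n d (d ^ i * j) = (d : ℤ) ^ i • sigmaGen n d j := by
  induction i with
  | zero => simp
  | succ i ih => rw [pow_succ', mul_assoc, sigmaGen_mul_left, ih, smul_smul, pow_succ']

theorem sigmaGen_congr {n d a b : ℕ} (h : a ≡ b [MOD n]) : sigmaGen n d a = sigmaGen n d b := by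
  rw [sigmaGen, (ZMod.natCast_eq_natCast_iff a b n).mpr h, sigmaGen]

def sigmaExpand (n m d c : ℕ) [NeZero n] (h : m ∣ c * n) : SigmaGrp n d →ₗ[ℤ] SigmaGrp m d :=
  Submodule.mapQ _ _
    ((expandHom n m c h).toLinearMap.restrict fun a (ha : evalOne n a = 0) =>
      (evalOne_expandHom n m c h a).trans ha)
    fun _ ha => expandHom_mem_Esub n m d c h ha

theorem sigmaExpand_sigmaGen (n m d c : ℕ) [NeZero n] (h : m ∣ c * n) (j : ℕ) :
    sigmaExpand n m d c h (sigmaGen n d j) = sigmaGen m d (c * j) := by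
  refine congr_arg (Submodule.Quotient.mk (p := (Esub m d).comap (Znd m).subtype)) ?_
  ext
  change expandHom n m c h (eZ n j) = (eZ m (c * j : ℕ) : Rq m)
  rw [coe_eZ_natCast, coe_eZ_natCast, map_sub, map_one, expandHom_xPow]

theorem sigmaExpand_comp_sigmaExpand (n m l d c c' : ℕ) [NeZero n] [NeZero m]
    (h : m ∣ c * n) (h' : l ∣ c' * m) (h'' : l ∣ c' * c * n) :
    sigmaExpand m l d c' h' ∘ₗ sigmaExpand n m d c h = sigmaExpand n l d (c' * c) h'' :=
  sigma_linearMap_ext fun j => by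
    simp only [LinearMap.comp_apply, sigmaExpand_sigmaGen, mul_assoc]

theorem sigmaExpand_eq_pow_smul (n d c i : ℕ) [NeZero n] (h : n ∣ c * n) (hc : c = d ^ i) :
    sigmaExpand n n d c h = (d : ℤ) ^ i • LinearMap.id :=
  sigma_linearMap_ext fun j => by
    rw [sigmaExpand_sigmaGen, hc, sigmaGen_pow_mul, LinearMap.smul_apply, LinearMap.id_apply]

theorem sigmaExpand_eq_id (n d c : ℕ) [NeZero n] (h : n ∣ c * n) (hc : c ≡ 1 [MOD n]) :
    sigmaExpand n n d c h = LinearMap.id :=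
  sigma_linearMap_ext fun j => by
    rw [sigmaExpand_sigmaGen, LinearMap.id_apply, sigmaGen_congr (by simpa using hc.mul_right j)]

theorem bijective_pow_smul_id (m d i : ℕ) [NeZero m] (hmd : Nat.Coprime m d) :
    Function.Bijective ((d : ℤ) ^ i • LinearMap.id : SigmaGrp m d →ₗ[ℤ] SigmaGrp m d) := by
  obtain ⟨c, hc⟩ : ∃ c : ℕ, c * d ^ i ≡ 1 [MOD m] := by
    let u := ZMod.unitOfCoprime (d ^ i) (hmd.symm.pow_left i)
    refine ⟨(u⁻¹ : (ZMod m)ˣ).val.val, (ZMod.natCast_eq_natCast_iff _ _ _).mp ?_⟩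
    rw [Nat.cast_mul, ZMod.natCast_zmod_val, Nat.cast_one]
    exact u.inv_mul
  have hdvd (c' : ℕ) : m ∣ c' * m := dvd_mul_left m c'
  have hleft : sigmaExpand m m d c (hdvd c) ∘ₗ sigmaExpand m m d (d ^ i) (hdvd _) =
      LinearMap.id := by
    rw [sigmaExpand_comp_sigmaExpand m m m d _ _ _ _ (hdvd _), sigmaExpand_eq_id m d _ _ hc]
  have hright : sigmaExpand m m d (d ^ i) (hdvd _) ∘ₗ sigmaExpand m m d c (hdvd c) =
      LinearMap.id := by
    rw [sigmaExpand_comp_sigmaExpand m m m d _ _ _ _ (hdvd _),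
      sigmaExpand_eq_id m d _ _ (by rwa [mul_comm])]
  rw [← sigmaExpand_eq_pow_smul m d (d ^ i) i (hdvd _) rfl]
  exact Function.bijective_iff_has_inverse.mpr
    ⟨_, LinearMap.congr_fun hleft, LinearMap.congr_fun hright⟩

theorem nonempty_linearEquiv_ker_comp_prod {R G H : Type*} [Ring R] [AddCommGroup G]
    [AddCommGroup H] [Module R G] [Module R H] (φ : G →ₗ[R] H) (ψ : H →ₗ[R] G)
    (hbij : Function.Bijective (φ ∘ₗ ψ)) :
    Nonempty (G ≃ₗ[R] LinearMap.ker (ψ ∘ₗ φ) × H) := by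
  have hψ : Function.Injective ψ := .of_comp (f := φ) hbij.injective
  have hker : LinearMap.ker (ψ ∘ₗ φ) = LinearMap.ker φ := by
    rw [LinearMap.ker_comp, LinearMap.ker_eq_bot.mpr hψ, Submodule.comap_bot]
  let u := LinearEquiv.ofBijective _ hbij
  have hsection : φ ∘ₗ (ψ ∘ₗ u.symm.toLinearMap) = LinearMap.id := by
    ext y
    exact u.apply_symm_apply y
  let e := (Function.Exact.splitSurjectiveEquiv (LinearMap.exact_subtype_ker_map φ)
    (Submodule.injective_subtype _) ⟨_, hsection⟩).1
  rw [hker]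
  exact ⟨e⟩

theorem exists_eq_nseq_mul_dvd_pow (n d k : ℕ) : ∃ q, n = nseq n d k * q ∧ q ∣ d ^ k := by
  induction k with
  | zero => exact ⟨1, by simp [nseq], by simp⟩
  | succ k ih =>
    obtain ⟨q, hq, hqd⟩ := ih
    refine ⟨Nat.gcd (nseq n d k) d * q, ?_, pow_succ' d k ▸ mul_dvd_mul (Nat.gcd_dvd_right _ _) hqd⟩
    rw [nseq, ← mul_assoc, Nat.div_mul_cancel (Nat.gcd_dvd_left _ _)]
    exact hq

theorem sand_dune_decomposition_general (n d : ℕ) (hn : 1 ≤ n)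
    (k m : ℕ) (hm : m = nseq n d k)
    (hk : Nat.gcd m d = 1) :
    Nonempty (SigmaGrp n d ≃+
      (LinearMap.ker ((d ^ k : ℤ) • (LinearMap.id : SigmaGrp n d →ₗ[ℤ] SigmaGrp n d)) ×
        SigmaGrp m d)) := by
  obtain ⟨q, hnq, t, hqt⟩ := exists_eq_nseq_mul_dvd_pow n d k
  rw [← hm] at hnq
  have : NeZero n := ⟨by omega⟩
  have : NeZero m := ⟨by rintro rfl; omega⟩
  have hmn : m ∣ t * n := (Dvd.intro q hnq.symm).mul_left t
  have hnm : n ∣ q * m := ⟨1, by rw [hnq, mul_comm, mul_one]⟩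
  let φ := sigmaExpand n m d t hmn
  let ψ := sigmaExpand m n d q hnm
  have hψφ : ψ ∘ₗ φ = (d : ℤ) ^ k • LinearMap.id := by
    rw [sigmaExpand_comp_sigmaExpand n m n d t q hmn hnm (dvd_mul_left n _),
      sigmaExpand_eq_pow_smul n d _ k _ hqt.symm]
  have hφψ : φ ∘ₗ ψ = (d : ℤ) ^ k • LinearMap.id := by
    rw [sigmaExpand_comp_sigmaExpand m n m d q t hnm hmn (dvd_mul_left m _),
      sigmaExpand_eq_pow_smul m d _ k _ (by rw [hqt, mul_comm])]
  obtain ⟨e⟩ := nonempty_linearEquiv_ker_comp_prod φ ψ (hφψ ▸ bijective_pow_smul_id m d k hk)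
  rw [hψφ] at e
  exact ⟨e.toAddEquiv⟩

/-- Theorem: `Σ(n,d) ≅ Σ₀(n,d) ⊕ Σ(m,d)`, where `Σ₀(n,d)` is the kernel of
multiplication by `d^k` on `Σ(n,d)` and `m = n_k`. -/
theorem sand_dune_decomposition (n d : ℕ) (hn : 1 ≤ n) (hd : 2 ≤ d)
    (k m : ℕ) (hm : m = nseq n d k)
    (hk : Nat.gcd m d = 1) (hkmin : ∀ i < k, Nat.gcd (nseq n d i) d ≠ 1) :
    Nonempty (SigmaGrp n d ≃+
      (LinearMap.ker ((d ^ k : ℤ) • (LinearMap.id : SigmaGrp n d →ₗ[ℤ] SigmaGrp n d)) ×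
        SigmaGrp m d)) :=
  sand_dune_decomposition_general n d hn k m hm hk
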